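/- Let λ > 0, let a < b < c, and let f ∈ C⁰[a,c]. Then Φ_{[a,b],λ}(f) + Φ_{[b,c],λ}(f) − λ ≤ Φ_{[a,c],λ}(f) ≤ Φ_{[a,b],λ}(f) + Φ_{[b,c],λ}(f). -/

import Mathlib

open scoped BigOperators ENNReal
open MeasureTheory Set Filter

/-- A partition `a = t₀ < t₁ < ⋯ < t_k < t_{k+1} = b` of `[a,b]` with `k` interior points. -/
structure RTVPartition (a b : ℝ) where
  k : ℕ
  t : ℕ → ℝ
  ht0 : t 0 = a
  htlast : t (k + 1) = b
  hmono : ∀ i, i ≤ k → t i < t (i + 1)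

/-- `Φ_{[a,b],λ,P}(f) = ∑_{i=1}^{k+1} |f(t_i) − f(t_{i−1})| − λ·|P|`. -/
noncomputable def phiP (lam a b : ℝ) (f : ℝ → ℝ) (P : RTVPartition a b) : ℝ :=
  (∑ i ∈ Finset.range (P.k + 1), |f (P.t (i + 1)) - f (P.t i)|) - lam * P.k

/-- The regularized total variation `Φ_{[a,b],λ}(f) = sup_P Φ_{[a,b],λ,P}(f)`. -/
noncomputable def phiRTV (lam a b : ℝ) (f : ℝ → ℝ) : ℝ :=
  ⨆ P : RTVPartition a b, phiP lam a b f P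

/-!
Gluing partitions of `[a,b]` and `[b,c]` gives a partition of `[a,c]` with the same jumps and one
more interior point, `b`, which costs exactly `λ`; this is the lower bound. Conversely, cutting a
partition of `[a,c]` at `b`, with `b` added as an endpoint of both halves, can only increase the
sum of jumps (triangle inequality) and does not increase the number of interior points; this is
the upper bound. All suprema involved are finite because `f` is uniformly continuous and `λ > 0`.
-/

namespace RTVPartition

variable {a b c : ℝ}

lemma t_strictMonoOn (P : RTVPartition a b) : StrictMonoOn P.t (Iic (P.k + 1)) :=
  strictMonoOn_Iic_of_lt_succ fun i hi => P.hmono i (Nat.lt_succ_iff.mp hi)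

lemma t_mem_Icc (P : RTVPartition a b) {i : ℕ} (hi : i ≤ P.k + 1) : P.t i ∈ Icc a b := by
  have hle := P.t_strictMonoOn.monotoneOn
  constructor
  · calc a = P.t 0 := P.ht0.symm
      _ ≤ P.t i := hle (Nat.zero_le _ : 0 ≤ P.k + 1) hi (Nat.zero_le i)
  · calc P.t i ≤ P.t (P.k + 1) := hle hi (le_refl (P.k + 1)) hi
      _ = b := P.htlast

lemma nonempty (hab : a < b) : Nonempty (RTVPartition a b) :=
  ⟨{ k := 0
     t := fun i => if i = 0 then a else b
     ht0 := if_pos rfl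
     htlast := if_neg one_ne_zero
     hmono := fun i hi => by obtain rfl := Nat.le_zero.mp hi; simpa using hab }⟩

def append (P : RTVPartition a b) (Q : RTVPartition b c) : RTVPartition a c where
  k := P.k + Q.k + 1
  t i := if i ≤ P.k + 1 then P.t i else Q.t (i - (P.k + 1))
  ht0 := by simp [P.ht0]
  htlast := by
    rw [if_neg (by omega), show P.k + Q.k + 1 + 1 - (P.k + 1) = Q.k + 1 by omega, Q.htlast]
  hmono i hi := by
    split_ifs with h₁ h₂ h₂
    · exact P.hmono i (by omega)
    · obtain rfl : i = P.k + 1 := by omega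
      rw [P.htlast, show P.k + 1 + 1 - (P.k + 1) = 0 + 1 by omega]
      simpa only [Q.ht0] using Q.hmono 0 (Nat.zero_le _)
    · omega
    · rw [show i + 1 - (P.k + 1) = i - (P.k + 1) + 1 by omega]
      exact Q.hmono _ (by omega)

lemma append_t_of_le (P : RTVPartition a b) (Q : RTVPartition b c) {i : ℕ} (hi : i ≤ P.k + 1) :
    (P.append Q).t i = P.t i :=
  if_pos hi

lemma append_t_add (P : RTVPartition a b) (Q : RTVPartition b c) (i : ℕ) :
    (P.append Q).t (P.k + 1 + i) = Q.t i := by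
  rcases i with _ | i
  · rw [add_zero, append_t_of_le _ _ le_rfl, P.htlast, Q.ht0]
  · exact (if_neg (by omega)).trans (congrArg Q.t (by omega))

def prefixTo (Q : RTVPartition a c) (j : ℕ) (hj : j ≤ Q.k) (hb : Q.t j < b) :
    RTVPartition a b where
  k := j
  t i := if i ≤ j then Q.t i else b
  ht0 := by simp [Q.ht0]
  htlast := if_neg (by omega)
  hmono i hi := by
    rcases hi.lt_or_eq with hi | rfl
    · rw [if_pos hi.le, if_pos (Nat.succ_le_of_lt hi)]
      exact Q.hmono i (by omega)
    · rwa [if_pos le_rfl, if_neg (by omega)]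

def suffixFrom (Q : RTVPartition a c) (j : ℕ) (hj : j ≤ Q.k) (hb : b < Q.t (j + 1)) :
    RTVPartition b c where
  k := Q.k - j
  t i := if i = 0 then b else Q.t (j + i)
  ht0 := if_pos rfl
  htlast := by rw [if_neg (by omega), show j + (Q.k - j + 1) = Q.k + 1 by omega, Q.htlast]
  hmono i hi := by
    rcases i with _ | i
    · rwa [if_pos rfl, if_neg (Nat.succ_ne_zero 0)]
    · rw [if_neg i.succ_ne_zero, if_neg (i + 1).succ_ne_zero]
      exact Q.hmono _ (by omega)

lemma exists_t_lt_le (Q : RTVPartition a c) (hab : a < b) (hbc : b ≤ c) :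
    ∃ j ≤ Q.k, Q.t j < b ∧ b ≤ Q.t (j + 1) := by
  have hlast : b ≤ Q.t (Q.k + 1) := by rwa [Q.htlast]
  have hex : ∃ j, b ≤ Q.t (j + 1) := ⟨Q.k, hlast⟩
  refine ⟨Nat.find hex, Nat.find_min' hex hlast, ?_, Nat.find_spec hex⟩
  rcases h : Nat.find hex with _ | j
  · rwa [Q.ht0]
  · exact not_le.mp (Nat.find_min hex (h ▸ Nat.lt_succ_self j))

end RTVPartition

section

open Finset

variable {lam a b c : ℝ} {f : ℝ → ℝ}

lemma phiP_eq_sum_range_add_sum_Ico (Q : RTVPartition a b) {j : ℕ} (hj : j ≤ Q.k) :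
    phiP lam a b f Q = ∑ i ∈ range j, |f (Q.t (i + 1)) - f (Q.t i)|
      + |f (Q.t (j + 1)) - f (Q.t j)|
      + ∑ i ∈ Ico (j + 1) (Q.k + 1), |f (Q.t (i + 1)) - f (Q.t i)| - lam * Q.k := by
  rw [phiP, ← sum_range_add_sum_Ico _ (by omega : j + 1 ≤ Q.k + 1), sum_range_succ]

lemma phiP_append (P : RTVPartition a b) (Q : RTVPartition b c) :
    phiP lam a c f (P.append Q) = phiP lam a b f P + phiP lam b c f Q - lam := by
  have hk : (P.append Q).k + 1 = (P.k + 1) + (Q.k + 1) := by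
    show P.k + Q.k + 1 + 1 = _; omega
  have hleft : ∑ i ∈ range (P.k + 1), |f ((P.append Q).t (i + 1)) - f ((P.append Q).t i)| =
      ∑ i ∈ range (P.k + 1), |f (P.t (i + 1)) - f (P.t i)| :=
    sum_congr rfl fun i hi => by
      rw [Finset.mem_range] at hi
      rw [P.append_t_of_le Q (by omega), P.append_t_of_le Q (by omega)]
  have hright : ∀ i, |f ((P.append Q).t (P.k + 1 + i + 1)) - f ((P.append Q).t (P.k + 1 + i))| =
      |f (Q.t (i + 1)) - f (Q.t i)| := fun i => by
    rw [add_assoc (P.k + 1), P.append_t_add, P.append_t_add]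
  rw [phiP, phiP, phiP, hk, sum_range_add, hleft]
  simp only [hright, show (P.append Q).k = P.k + Q.k + 1 from rfl]
  push_cast
  ring

lemma phiP_prefixTo (Q : RTVPartition a c) {j : ℕ} (hj : j ≤ Q.k) (hb : Q.t j < b) :
    phiP lam a b f (Q.prefixTo j hj hb) =
      ∑ i ∈ range j, |f (Q.t (i + 1)) - f (Q.t i)| + |f b - f (Q.t j)| - lam * j := by
  have ht : ∀ i ≤ j, (Q.prefixTo j hj hb).t i = Q.t i := fun i hi => if_pos hi
  have hlast : (Q.prefixTo j hj hb).t (j + 1) = b := if_neg (by omega)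
  have hsum : ∑ i ∈ range j, |f ((Q.prefixTo j hj hb).t (i + 1)) - f ((Q.prefixTo j hj hb).t i)| =
      ∑ i ∈ range j, |f (Q.t (i + 1)) - f (Q.t i)| :=
    sum_congr rfl fun i hi => by
      rw [Finset.mem_range] at hi
      rw [ht i hi.le, ht (i + 1) hi]
  rw [phiP, show (Q.prefixTo j hj hb).k = j from rfl, sum_range_succ, hsum, hlast, ht j le_rfl]

lemma phiP_suffixFrom (Q : RTVPartition a c) {j : ℕ} (hj : j ≤ Q.k) (hb : b < Q.t (j + 1)) :
    phiP lam b c f (Q.suffixFrom j hj hb) =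
      |f (Q.t (j + 1)) - f b| + ∑ i ∈ Ico (j + 1) (Q.k + 1), |f (Q.t (i + 1)) - f (Q.t i)|
        - lam * (Q.k - j) := by
  have ht : ∀ i, (Q.suffixFrom j hj hb).t (i + 1) = Q.t (j + 1 + i) := fun i => by
    show (if i + 1 = 0 then b else Q.t (j + (i + 1))) = _
    rw [if_neg i.succ_ne_zero, add_comm i, add_assoc]
  rw [phiP, sum_range_succ', sum_Ico_eq_sum_range, show Q.k + 1 - (j + 1) = Q.k - j by omega]
  simp only [ht, (Q.suffixFrom j hj hb).ht0, ← add_assoc, add_zero]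
  rw [show (Q.suffixFrom j hj hb).k = Q.k - j from rfl, Nat.cast_sub hj]
  ring

lemma exists_phiP_le_add (hlam : 0 ≤ lam) (hab : a < b) (hbc : b < c) (Q : RTVPartition a c) :
    ∃ (P₁ : RTVPartition a b) (P₂ : RTVPartition b c),
      phiP lam a c f Q ≤ phiP lam a b f P₁ + phiP lam b c f P₂ := by
  obtain ⟨j, hj, hjb, hbj⟩ := Q.exists_t_lt_le hab hbc.le
  rw [phiP_eq_sum_range_add_sum_Ico Q hj]
  rcases hbj.lt_or_eq with hlt | heq
  · refine ⟨Q.prefixTo j hj hjb, Q.suffixFrom j hj hlt, ?_⟩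
    rw [phiP_prefixTo, phiP_suffixFrom]
    linarith [abs_sub_le (f (Q.t (j + 1))) (f b) (f (Q.t j))]
  · -- `b` is already a partition point: cut `Q` there, which saves one interior point
    have hj' : j + 1 ≤ Q.k := by
      by_contra h
      rw [show j = Q.k by omega, Q.htlast] at heq
      exact hbc.ne heq
    have hlt : b < Q.t (j + 1 + 1) := heq ▸ Q.hmono (j + 1) hj'
    refine ⟨Q.prefixTo j hj hjb, Q.suffixFrom (j + 1) hj' hlt, ?_⟩
    rw [phiP_prefixTo, phiP_suffixFrom, sum_eq_sum_Ico_succ_bot (by omega : j + 1 < Q.k + 1), heq]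
    push_cast
    linarith

lemma bddAbove_range_phiP (hlam : 0 < lam) (hf : ContinuousOn f (Icc a b)) :
    BddAbove (Set.range (phiP lam a b f)) := by
  obtain ⟨M, hM⟩ := isCompact_Icc.exists_bound_of_continuousOn hf
  obtain ⟨δ, hδ, hfδ⟩ := Metric.uniformContinuousOn_iff.mp
    (isCompact_Icc.uniformContinuousOn_of_continuous hf) lam hlam
  -- a jump across a cell shorter than `δ` is paid for by `λ`, a longer cell by its length
  have hjump : ∀ x ∈ Icc a b, ∀ y ∈ Icc a b, x ≤ y → |f y - f x| - lam ≤ 2 * M / δ * (y - x) := by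
    intro x hx y hy hxy
    have hMx : |f x| ≤ M := hM x hx
    have hMy : |f y| ≤ M := hM y hy
    have hM0 : 0 ≤ M := (abs_nonneg _).trans hMx
    by_cases hlong : δ ≤ y - x
    · have h2M : 2 * M ≤ 2 * M / δ * (y - x) := by
        rw [div_mul_eq_mul_div, le_div_iff₀ hδ]
        exact mul_le_mul_of_nonneg_left hlong (by positivity)
      linarith [abs_sub (f y) (f x)]
    · have hshort : dist y x < δ := by
        rw [Real.dist_eq, abs_of_nonneg (sub_nonneg.mpr hxy)]
        linarith
      have := hfδ y hy x hx hshort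
      rw [Real.dist_eq] at this
      have : 0 ≤ 2 * M / δ * (y - x) := by positivity
      linarith
  refine ⟨2 * M / δ * (b - a) + lam, ?_⟩
  rintro _ ⟨P, rfl⟩
  have hmem : ∀ i ∈ range (P.k + 1), P.t i ∈ Icc a b ∧ P.t (i + 1) ∈ Icc a b := fun i hi => by
    rw [Finset.mem_range] at hi
    exact ⟨P.t_mem_Icc (by omega), P.t_mem_Icc (by omega)⟩
  calc phiP lam a b f P
      = ∑ i ∈ range (P.k + 1), (|f (P.t (i + 1)) - f (P.t i)| - lam) + lam := by
        rw [phiP, sum_sub_distrib, sum_const, card_range, nsmul_eq_mul]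
        push_cast
        ring
    _ ≤ ∑ i ∈ range (P.k + 1), 2 * M / δ * (P.t (i + 1) - P.t i) + lam := by
        gcongr with i hi
        exact hjump _ (hmem i hi).1 _ (hmem i hi).2
          (P.hmono i (by simpa [Nat.lt_succ_iff] using hi)).le
    _ = 2 * M / δ * (b - a) + lam := by rw [← mul_sum, sum_range_sub, P.htlast, P.ht0]

lemma phiP_le_phiRTV (hlam : 0 < lam) (hf : ContinuousOn f (Icc a b)) (P : RTVPartition a b) :
    phiP lam a b f P ≤ phiRTV lam a b f :=
  le_ciSup (bddAbove_range_phiP hlam hf) P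

end

/-- Near-additivity of the regularized total variation under splitting the interval:
`Φ_{[a,b],λ}(f) + Φ_{[b,c],λ}(f) − λ ≤ Φ_{[a,c],λ}(f) ≤ Φ_{[a,b],λ}(f) + Φ_{[b,c],λ}(f)`. -/
theorem phiRTV_split (lam a b c : ℝ) (hlam : 0 < lam) (hab : a < b) (hbc : b < c)
    (f : ℝ → ℝ) (hf : ContinuousOn f (Icc a c)) :
    phiRTV lam a b f + phiRTV lam b c f - lam ≤ phiRTV lam a c f ∧
    phiRTV lam a c f ≤ phiRTV lam a b f + phiRTV lam b c f := by
  have := RTVPartition.nonempty hab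
  have := RTVPartition.nonempty hbc
  have := RTVPartition.nonempty (hab.trans hbc)
  have hf₁ : ContinuousOn f (Icc a b) := hf.mono (Icc_subset_Icc_right hbc.le)
  have hf₂ : ContinuousOn f (Icc b c) := hf.mono (Icc_subset_Icc_left hab.le)
  constructor
  · refine sub_le_iff_le_add.mpr (ciSup_add_ciSup_le fun P₁ P₂ => ?_)
    linarith [phiP_append (lam := lam) (f := f) P₁ P₂, phiP_le_phiRTV hlam hf (P₁.append P₂)]
  · refine ciSup_le fun Q => ?_
    obtain ⟨P₁, P₂, hQ⟩ := exists_phiP_le_add hlam.le hab hbc Q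
    linarith [phiP_le_phiRTV hlam hf₁ P₁, phiP_le_phiRTV hlam hf₂ P₂]
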